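/- arXiv:1402.3175 — 7 statements merged into one kernel-verified Lean document; each statement's English description precedes it below -/
import Mathlib

section
/- For bivariate distributions: if supp(P_2) ⊆ supp(P_1) and supp(Q_2) ⊆ supp(Q_1), then for every T ∈ 𝒞(P_2,Q_2), D(T‖P_1×Q_1) = D(P_2×Q_2‖P_1×Q_1) + D(T‖P_2×Q_2). -/
open Finset Filter Topology

def IsProbVec {n : ℕ} (P : Fin n → ℝ) : Prop :=
  (∀ i, 0 ≤ P i) ∧ ∑ i, P i = 1

def supp {α : Type*} (P : α → ℝ) : Set α := {i | 0 < P i}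

def supp2 {n m : ℕ} (S : Fin n → Fin m → ℝ) : Set (Fin n × Fin m) :=
  {p | 0 < S p.1 p.2}

def Coupling {n m : ℕ} (P : Fin n → ℝ) (Q : Fin m → ℝ) : Set (Fin n → Fin m → ℝ) :=
  {S | (∀ i j, 0 ≤ S i j) ∧ (∀ i, ∑ j, S i j = P i) ∧ (∀ j, ∑ i, S i j = Q j)}

/-- Kullback-Leibler divergence of bivariate distributions, as a real-valued sum
(valid, with the convention `0 log 0 = 0`, whenever `supp2 T ⊆ supp2 S`). -/
noncomputable def D2 {n m : ℕ} (T S : Fin n → Fin m → ℝ) : ℝ :=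
  ∑ i, ∑ j, T i j * Real.log (T i j / S i j)

/-- `T'` is an I-projection of `S` onto `𝒯`: it is absolutely continuous w.r.t. `S`
(equivalently, `D(T'‖S) < ∞`) and minimizes the divergence among all such elements of `𝒯`
(elements with `¬ supp2 T ⊆ supp2 S` have infinite divergence). -/
def IsIProj {n m : ℕ} (S : Fin n → Fin m → ℝ) (𝒯 : Set (Fin n → Fin m → ℝ))
    (T' : Fin n → Fin m → ℝ) : Prop :=
  T' ∈ 𝒯 ∧ supp2 T' ⊆ supp2 S ∧ ∀ T ∈ 𝒯, supp2 T ⊆ supp2 S → D2 T' S ≤ D2 T S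

noncomputable def prodDist {n m : ℕ} (P : Fin n → ℝ) (Q : Fin m → ℝ) :
    Fin n → Fin m → ℝ := fun i j => P i * Q j

/-- KL divergence of univariate distributions. -/
noncomputable def Dv {n : ℕ} (P Q : Fin n → ℝ) : ℝ :=
  ∑ i, P i * Real.log (P i / Q i)

def GeomEquiv {n m : ℕ} (C1 C2 : Set (Fin n → Fin m → ℝ)) : Prop :=
  (∀ S ∈ C1, ∃ T ∈ C2, supp2 T = supp2 S) ∧ (∀ T ∈ C2, ∃ S ∈ C1, supp2 S = supp2 T)

theorem stmt4 {n m : ℕ} (P₁ P₂ : Fin n → ℝ) (Q₁ Q₂ : Fin m → ℝ)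
    (hP₁ : IsProbVec P₁) (hQ₁ : IsProbVec Q₁) (hP₂ : IsProbVec P₂) (hQ₂ : IsProbVec Q₂)
    (hP : supp P₂ ⊆ supp P₁) (hQ : supp Q₂ ⊆ supp Q₁)
    (T : Fin n → Fin m → ℝ) (hT : T ∈ Coupling P₂ Q₂) :
    D2 T (prodDist P₁ Q₁) =
      D2 (prodDist P₂ Q₂) (prodDist P₁ Q₁) + D2 T (prodDist P₂ Q₂) := by
  obtain ⟨hTnn, hTrow, hTcol⟩ := hT
  have hP2pos : ∀ i j, 0 < T i j → 0 < P₂ i := fun i j h =>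
    lt_of_lt_of_le h (by rw [← hTrow i]; exact Finset.single_le_sum (fun j _ => hTnn i j) (Finset.mem_univ j))
  have hQ2pos : ∀ i j, 0 < T i j → 0 < Q₂ j := fun i j h =>
    lt_of_lt_of_le h (by rw [← hTcol j]; exact Finset.single_le_sum (fun i _ => hTnn i j) (Finset.mem_univ i))
  have key : ∀ i j, T i j * Real.log (T i j / (P₁ i * Q₁ j)) =
      T i j * Real.log (T i j / (P₂ i * Q₂ j)) + (T i j * Real.log (P₂ i / P₁ i)
        + T i j * Real.log (Q₂ j / Q₁ j)) := by
    intro i j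
    rcases eq_or_lt_of_le (hTnn i j) with h | h
    · simp [← h]
    · have hp2 := hP2pos i j h
      have hq2 := hQ2pos i j h
      have hp1 : 0 < P₁ i := hP hp2
      have hq1 : 0 < Q₁ j := hQ hq2
      rw [Real.log_div h.ne' (by positivity), Real.log_div h.ne' (by positivity),
        Real.log_div hp2.ne' hp1.ne', Real.log_div hq2.ne' hq1.ne',
        Real.log_mul hp1.ne' hq1.ne', Real.log_mul hp2.ne' hq2.ne']
      ring
  have key2 : ∀ i j, P₂ i * Q₂ j * Real.log ((P₂ i * Q₂ j) / (P₁ i * Q₁ j)) =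
      P₂ i * Q₂ j * Real.log (P₂ i / P₁ i) + P₂ i * Q₂ j * Real.log (Q₂ j / Q₁ j) := by
    intro i j
    rcases eq_or_lt_of_le (hP₂.1 i) with hp | hp
    · simp [← hp]
    rcases eq_or_lt_of_le (hQ₂.1 j) with hq | hq
    · simp [← hq]
    have hp1 : 0 < P₁ i := hP hp
    have hq1 : 0 < Q₁ j := hQ hq
    rw [Real.log_div (by positivity) (by positivity),
      Real.log_div hp.ne' hp1.ne', Real.log_div hq.ne' hq1.ne',
      Real.log_mul hp1.ne' hq1.ne', Real.log_mul hp.ne' hq.ne']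
    ring
  have sA : ∑ i, ∑ j, T i j * Real.log (P₂ i / P₁ i) = ∑ i, P₂ i * Real.log (P₂ i / P₁ i) := by
    refine Finset.sum_congr rfl fun i _ => ?_
    rw [← Finset.sum_mul, hTrow]
  have sB : ∑ i, ∑ j, T i j * Real.log (Q₂ j / Q₁ j) = ∑ j, Q₂ j * Real.log (Q₂ j / Q₁ j) := by
    rw [Finset.sum_comm]
    refine Finset.sum_congr rfl fun j _ => ?_
    rw [← Finset.sum_mul, hTcol]
  have sC : ∑ i, ∑ j, P₂ i * Q₂ j * Real.log (P₂ i / P₁ i)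
      = ∑ i, P₂ i * Real.log (P₂ i / P₁ i) := by
    refine Finset.sum_congr rfl fun i _ => ?_
    rw [← Finset.sum_mul]
    have : ∑ j, P₂ i * Q₂ j = P₂ i := by rw [← Finset.mul_sum, hQ₂.2, mul_one]
    rw [this]
  have sD : ∑ i, ∑ j, P₂ i * Q₂ j * Real.log (Q₂ j / Q₁ j)
      = ∑ j, Q₂ j * Real.log (Q₂ j / Q₁ j) := by
    rw [Finset.sum_comm]
    refine Finset.sum_congr rfl fun j _ => ?_
    have : ∀ i, P₂ i * Q₂ j * Real.log (Q₂ j / Q₁ j)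
        = P₂ i * (Q₂ j * Real.log (Q₂ j / Q₁ j)) := fun i => by ring
    simp only [this]
    rw [← Finset.sum_mul, hP₂.2, one_mul]
  simp only [D2, prodDist]
  simp only [key, key2, Finset.sum_add_distrib]
  rw [sA, sB, sC, sD]
  ring
end

section
/- There are no two distinct vertices U, V of a transportation polytope 𝒞(P,Q) such that supp(U) ⊊ supp(V) or supp(U) = supp(V); equivalently, every vertex of 𝒞(P,Q) is uniquely determined by its support, and the support of one vertex cannot strictly contain the support of another. -/
open Finset Filter Topology

/-!
If `supp U ⊆ supp V`, then `V` can be pushed a little further along the line from `U` through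
`V` without leaving the polytope: the marginal constraints are affine, and nonnegativity is only
at stake where `V` vanishes, where `U` vanishes too. So `V` lies strictly inside a segment
with endpoint `U`, and extremality of `V` forces `U = V`.
-/

theorem eq_of_mem_extremePoints_of_add_smul_sub_mem {𝕜 E : Type*} [Field 𝕜] [LinearOrder 𝕜]
    [IsStrictOrderedRing 𝕜] [AddCommGroup E] [Module 𝕜 E] {C : Set E} {U V : E}
    (hV : V ∈ C.extremePoints 𝕜) (hU : U ∈ C) {t : 𝕜} (ht : 0 < t)
    (hW : V + t • (V - U) ∈ C) : U = V := by
  have ht1 : (1 + t) ≠ 0 := by positivity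
  refine hV.2 hU hW ⟨t / (1 + t), 1 / (1 + t), by positivity, by positivity, ?_, ?_⟩
  · field_simp
    ring
  · match_scalars <;> field_simp; ring

theorem eventually_nonneg_add_mul_sub {u v : ℝ} (hu : 0 ≤ u) (hv : 0 ≤ v)
    (huv : 0 < u → 0 < v) : ∀ᶠ t in 𝓝 (0 : ℝ), 0 ≤ v + t * (v - u) := by
  rcases hv.lt_or_eq with hv | hv
  · have hlim : Tendsto (fun t : ℝ => v + t * (v - u)) (𝓝 0) (𝓝 v) := by
      simpa using ((continuous_id.mul continuous_const).const_add v).tendsto (0 : ℝ)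
    exact (hlim.eventually (lt_mem_nhds hv)).mono fun _ h => h.le
  · have hu0 : u = 0 := le_antisymm (not_lt.1 fun h => (huv h).ne hv) hu
    exact Eventually.of_forall fun t => by simp [← hv, hu0]

variable {n m : ℕ} {P : Fin n → ℝ} {Q : Fin m → ℝ} {U V : Fin n → Fin m → ℝ}

theorem add_smul_sub_mem_coupling (hU : U ∈ Coupling P Q) (hV : V ∈ Coupling P Q) {t : ℝ}
    (hnonneg : ∀ i j, 0 ≤ V i j + t * (V i j - U i j)) : V + t • (V - U) ∈ Coupling P Q := by
  obtain ⟨-, hUrow, hUcol⟩ := hU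
  obtain ⟨-, hVrow, hVcol⟩ := hV
  refine ⟨hnonneg, fun i => ?_, fun j => ?_⟩ <;>
    simp only [Pi.add_apply, Pi.smul_apply, Pi.sub_apply, smul_eq_mul, sum_add_distrib,
      ← mul_sum, sum_sub_distrib, hUrow, hVrow, hUcol, hVcol, sub_self, mul_zero, add_zero]

theorem exists_pos_add_smul_sub_mem_coupling (hU : U ∈ Coupling P Q) (hV : V ∈ Coupling P Q)
    (hsupp : supp2 U ⊆ supp2 V) : ∃ t : ℝ, 0 < t ∧ V + t • (V - U) ∈ Coupling P Q := by
  have hnonneg : ∀ᶠ t in 𝓝 (0 : ℝ), ∀ i j, 0 ≤ V i j + t * (V i j - U i j) :=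
    eventually_all.2 fun i => eventually_all.2 fun j =>
      eventually_nonneg_add_mul_sub (hU.1 i j) (hV.1 i j) fun h => hsupp (a := (i, j)) h
  obtain ⟨t, htpos, ht⟩ :=
    ((eventually_mem_nhdsWithin (a := (0 : ℝ)) (s := Set.Ioi 0)).and
      (hnonneg.filter_mono nhdsWithin_le_nhds)).exists
  exact ⟨t, htpos, add_smul_sub_mem_coupling hU hV ht⟩

theorem stmt7_general {n m : ℕ} (P : Fin n → ℝ) (Q : Fin m → ℝ)
    (U V : Fin n → Fin m → ℝ)
    (hU : U ∈ (Coupling P Q).extremePoints ℝ) (hV : V ∈ (Coupling P Q).extremePoints ℝ)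
    (hsupp : supp2 U ⊆ supp2 V) : U = V := by
  obtain ⟨t, ht, hW⟩ := exists_pos_add_smul_sub_mem_coupling hU.1 hV.1 hsupp
  exact eq_of_mem_extremePoints_of_add_smul_sub_mem hV hU.1 ht hW

theorem stmt7 {n m : ℕ} (P : Fin n → ℝ) (Q : Fin m → ℝ)
    (hP : IsProbVec P) (hQ : IsProbVec Q)
    (U V : Fin n → Fin m → ℝ)
    (hU : U ∈ (Coupling P Q).extremePoints ℝ) (hV : V ∈ (Coupling P Q).extremePoints ℝ)
    (hsupp : supp2 U ⊆ supp2 V) : U = V :=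
  stmt7_general P Q U V hU hV hsupp
end

section
/- A point U ∈ 𝒞(P,Q) is a vertex (extreme point) if and only if the bipartite graph G_U with left nodes {1,…,n}, right nodes {1,…,m}, and edges {(i,j) : U(i,j) > 0} contains no cycle (is a forest). -/
open Finset Filter Topology

/-- The bipartite graph on `Fin n ⊕ Fin m` with edge set `E ⊆ Fin n × Fin m`. -/
def bipGraph {n m : ℕ} (E : Set (Fin n × Fin m)) : SimpleGraph (Fin n ⊕ Fin m) where
  Adj u v := ∃ i j, (i, j) ∈ E ∧
    ((u = Sum.inl i ∧ v = Sum.inr j) ∨ (u = Sum.inr j ∧ v = Sum.inl i))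
  symm := by
    constructor
    rintro u v ⟨i, j, hE, h | h⟩
    · exact ⟨i, j, hE, Or.inr ⟨h.2, h.1⟩⟩
    · exact ⟨i, j, hE, Or.inl ⟨h.2, h.1⟩⟩
  loopless := by
    constructor
    rintro u ⟨i, j, hE, ⟨h1, h2⟩ | ⟨h1, h2⟩⟩ <;> simp_all

/-!
A signed perturbation `Z` with zero row and column sums and support inside `supp2 U` moves `U`
both ways inside `Coupling P Q`, so `U` is extreme iff no nonzero such `Z` exists. Going around a
cycle of `G_U` with alternating signs `±1` gives such a `Z`. Conversely, if `G_U` is a forest,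
every edge `(i, j)` is a bridge; summing the row sums of `Z` over the rows of the component of
`i` after removing the edge and subtracting the column sums over its columns leaves exactly
`Z i j`, so `Z = 0`.
-/


lemma List.sum_count_prod_mk_left {α β : Type*} [DecidableEq α] [DecidableEq β] [Fintype β]
    (l : List (α × β)) (a : α) : ∑ b, l.count (a, b) = (l.map Prod.fst).count a := by
  induction l with
  | nil => simp
  | cons p l ih =>
    obtain ⟨x, y⟩ := p
    simp only [List.count_cons, List.map_cons, Finset.sum_add_distrib, ih, beq_iff_eq,
      Nat.add_left_cancel_iff]
    by_cases h : x = a <;> simp [h]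

lemma List.sum_count_prod_mk_right {α β : Type*} [DecidableEq α] [DecidableEq β] [Fintype α]
    (l : List (α × β)) (b : β) : ∑ a, l.count (a, b) = (l.map Prod.snd).count b := by
  induction l with
  | nil => simp
  | cons p l ih =>
    obtain ⟨x, y⟩ := p
    simp only [List.count_cons, List.map_cons, Finset.sum_add_distrib, ih, beq_iff_eq,
      Nat.add_left_cancel_iff]
    by_cases h : y = b <;> simp [h]

namespace SimpleGraph.Walk

variable {V : Type*} {G : SimpleGraph V} [DecidableEq V]

def netFlow {u v : V} (p : G.Walk u v) (x y : V) : ℤ :=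
  (p.darts.map Dart.toProd).count (x, y) - (p.darts.map Dart.toProd).count (y, x)

lemma netFlow_swap {u v : V} (p : G.Walk u v) (x y : V) : p.netFlow y x = -p.netFlow x y := by
  simp [netFlow]

lemma adj_of_netFlow_ne_zero {u v : V} {p : G.Walk u v} {x y : V} (h : p.netFlow x y ≠ 0) :
    G.Adj x y := by
  have hmem : (x, y) ∈ p.darts.map Dart.toProd ∨ (y, x) ∈ p.darts.map Dart.toProd := by
    by_contra! h'
    simp [netFlow, List.count_eq_zero.mpr h'.1, List.count_eq_zero.mpr h'.2] at h
  rcases hmem with hm | hm <;> obtain ⟨⟨⟨a, b⟩, hab⟩, -, hd⟩ := List.mem_map.mp hm <;>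
    obtain ⟨rfl, rfl⟩ := Prod.ext_iff.mp hd
  exacts [hab, hab.symm]

lemma sum_netFlow_eq_zero [Fintype V] {u : V} (p : G.Walk u u) (x : V) :
    ∑ y, p.netFlow x y = 0 := by
  simp only [netFlow, Finset.sum_sub_distrib, ← Nat.cast_sum, List.sum_count_prod_mk_left,
    List.sum_count_prod_mk_right, List.map_map]
  rw [sub_eq_zero, Nat.cast_inj]
  exact ((p.map_fst_darts ▸ p.map_snd_darts ▸ p.tail_support_perm_dropLast_support).count_eq x).symm

lemma IsTrail.netFlow_of_mem_darts {u v : V} {p : G.Walk u v} (hp : p.IsTrail) {d : G.Dart}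
    (hd : d ∈ p.darts) : p.netFlow d.fst d.snd = 1 := by
  have hnodup : p.darts.Nodup := hp.edges_nodup.of_map _
  have hsymm : d.symm ∉ p.darts := fun hs =>
    d.symm_ne (List.inj_on_of_nodup_map hp.edges_nodup hs hd d.edge_symm)
  have h1 : (p.darts.map Dart.toProd).count (d.fst, d.snd) = 1 :=
    List.count_eq_one_of_mem (hnodup.map Dart.toProd_injective) (List.mem_map_of_mem hd)
  have h0 : (p.darts.map Dart.toProd).count (d.snd, d.fst) = 0 :=
    List.count_eq_zero.mpr fun h => by
      obtain ⟨d', hd', he⟩ := List.mem_map.mp h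
      exact hsymm (Dart.toProd_injective (he.trans rfl : d'.toProd = d.symm.toProd) ▸ hd')
  simp [netFlow, h1, h0]

end SimpleGraph.Walk

open Sum

section Bipartite

variable {n m : ℕ} {E : Set (Fin n × Fin m)}

lemma bipGraph_adj_inl_inr {i : Fin n} {j : Fin m} :
    (bipGraph E).Adj (inl i) (inr j) ↔ (i, j) ∈ E := by
  constructor
  · rintro ⟨i', j', hE, ⟨h1, h2⟩ | ⟨h1, h2⟩⟩ <;> simp_all
  · intro h; exact ⟨i, j, h, Or.inl ⟨rfl, rfl⟩⟩

lemma bipGraph_not_adj_inl_inl (i i' : Fin n) : ¬ (bipGraph E).Adj (inl i) (inl i') := by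
  rintro ⟨_, _, _, ⟨-, h⟩ | ⟨h, -⟩⟩ <;> cases h

lemma bipGraph_not_adj_inr_inr (j j' : Fin m) : ¬ (bipGraph E).Adj (inr j) (inr j') := by
  rintro ⟨_, _, _, ⟨h, -⟩ | ⟨-, h⟩⟩ <;> cases h

lemma exists_circulation_of_not_isAcyclic (hE : ¬ (bipGraph E).IsAcyclic) :
    ∃ Z : Fin n → Fin m → ℝ, (∀ i, ∑ j, Z i j = 0) ∧ (∀ j, ∑ i, Z i j = 0) ∧
      (∀ i j, Z i j ≠ 0 → (i, j) ∈ E) ∧ Z ≠ 0 := by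
  obtain ⟨v, c, hc⟩ : ∃ v, ∃ c : (bipGraph E).Walk v v, c.IsCycle := by
    simpa only [SimpleGraph.IsAcyclic, not_forall, not_not, exists_prop] using hE
  have flow_inl_inl (i i' : Fin n) : c.netFlow (inl i) (inl i') = 0 := by
    by_contra h; exact bipGraph_not_adj_inl_inl i i' (SimpleGraph.Walk.adj_of_netFlow_ne_zero h)
  have flow_inr_inr (j j' : Fin m) : c.netFlow (inr j) (inr j') = 0 := by
    by_contra h; exact bipGraph_not_adj_inr_inr j j' (SimpleGraph.Walk.adj_of_netFlow_ne_zero h)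
  refine ⟨fun i j => c.netFlow (inl i) (inr j), fun i => ?_, fun j => ?_, fun i j h => ?_, ?_⟩
  · have := c.sum_netFlow_eq_zero (inl i)
    rw [Fintype.sum_sum_type] at this
    simp only [flow_inl_inl, Finset.sum_const_zero, zero_add] at this
    beta_reduce
    exact_mod_cast this
  · have := c.sum_netFlow_eq_zero (inr j)
    rw [Fintype.sum_sum_type] at this
    simp only [flow_inr_inr, Finset.sum_const_zero, add_zero, c.netFlow_swap _ (inr j),
      Finset.sum_neg_distrib, neg_eq_zero] at this
    beta_reduce
    exact_mod_cast this
  · beta_reduce at h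
    exact bipGraph_adj_inl_inr.mp <|
      SimpleGraph.Walk.adj_of_netFlow_ne_zero (p := c) (by exact_mod_cast h)
  · obtain ⟨d, hd⟩ := List.exists_mem_of_ne_nil _
      (SimpleGraph.Walk.darts_eq_nil.not.mpr hc.not_nil)
    have hflow := hc.isTrail.netFlow_of_mem_darts hd
    intro hZ
    obtain ⟨i, j, -, ⟨h1, h2⟩ | ⟨h1, h2⟩⟩ := d.adj <;> rw [h1, h2] at hflow
    · simpa [hflow] using congr_fun (congr_fun hZ i) j
    · simpa [← neg_eq_zero (a := c.netFlow (inl i) (inr j)), ← c.netFlow_swap, hflow] using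
        congr_fun (congr_fun hZ i) j

lemma sum_cut_eq_zero {D : Fin n → Fin m → ℝ} (hrow : ∀ i, ∑ j, D i j = 0)
    (hcol : ∀ j, ∑ i, D i j = 0) (S : Set (Fin n ⊕ Fin m)) [DecidablePred (· ∈ S)] :
    ∑ p : Fin n × Fin m,
      ((if inl p.1 ∈ S then D p.1 p.2 else 0) - (if inr p.2 ∈ S then D p.1 p.2 else 0)) = 0 := by
  have hS_rows : ∑ i, ∑ j, (if inl i ∈ S then D i j else 0) = 0 :=
    Finset.sum_eq_zero fun i _ => by split_ifs <;> simp [hrow]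
  have hS_cols : ∑ i, ∑ j, (if inr j ∈ S then D i j else 0) = 0 := by
    rw [Finset.sum_comm]
    exact Finset.sum_eq_zero fun j _ => by split_ifs <;> simp [hcol]
  rw [Fintype.sum_prod_type]
  simp only [Finset.sum_sub_distrib, hS_rows, hS_cols, sub_zero]

lemma eq_zero_of_isAcyclic {D : Fin n → Fin m → ℝ} (hE : (bipGraph E).IsAcyclic)
    (hsupp : ∀ i j, D i j ≠ 0 → (i, j) ∈ E) (hrow : ∀ i, ∑ j, D i j = 0)
    (hcol : ∀ j, ∑ i, D i j = 0) : D = 0 := by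
  classical
  ext i j
  by_contra hne
  set G' := (bipGraph E).deleteEdges {s(inl i, inr j)}
  have hbridge : ¬ G'.Reachable (inl i) (inr j) :=
    SimpleGraph.isBridge_iff.mp <| SimpleGraph.isAcyclic_iff_forall_adj_isBridge.mp hE <|
      bipGraph_adj_inl_inr.mpr (hsupp i j hne)
  have hcut := sum_cut_eq_zero hrow hcol {v | G'.Reachable (inl i) v}
  rw [Finset.sum_eq_single (i, j)] at hcut
  · simp only [Set.mem_ofPred_eq, SimpleGraph.Reachable.rfl, ↓reduceIte, hbridge, sub_zero] at hcut
    exact hne hcut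
  · rintro ⟨i', j'⟩ - hij
    by_cases hD : D i' j' = 0
    · simp [hD]
    have hadj : G'.Adj (inl i') (inr j') := by
      rw [SimpleGraph.deleteEdges_adj]
      refine ⟨bipGraph_adj_inl_inr.mpr (hsupp i' j' hD), ?_⟩
      simpa [Sym2.eq_iff] using hij
    have : G'.Reachable (inl i) (inl i') ↔ G'.Reachable (inl i) (inr j') :=
      ⟨fun h => h.trans hadj.reachable, fun h => h.trans hadj.symm.reachable⟩
    simp [this]
  · simp

end Bipartite

section Coupling

variable {n m : ℕ} {P : Fin n → ℝ} {Q : Fin m → ℝ} {U : Fin n → Fin m → ℝ}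

lemma add_smul_mem_coupling {Z : Fin n → Fin m → ℝ} (hU : U ∈ Coupling P Q)
    (hrow : ∀ i, ∑ j, Z i j = 0) (hcol : ∀ j, ∑ i, Z i j = 0) {t : ℝ}
    (hnonneg : ∀ i j, 0 ≤ U i j + t * Z i j) : U + t • Z ∈ Coupling P Q := by
  refine ⟨hnonneg, fun i => ?_, fun j => ?_⟩ <;>
    simp [Finset.sum_add_distrib, ← Finset.mul_sum, hU.2.1, hU.2.2, hrow, hcol]

lemma notMem_extremePoints_coupling {Z : Fin n → Fin m → ℝ} (hU : U ∈ Coupling P Q)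
    (hrow : ∀ i, ∑ j, Z i j = 0) (hcol : ∀ j, ∑ i, Z i j = 0)
    (hsupp : ∀ i j, Z i j ≠ 0 → 0 < U i j) (hZ : Z ≠ 0) :
    U ∉ (Coupling P Q).extremePoints ℝ := by
  have hev : ∀ᶠ t in 𝓝 (0 : ℝ), ∀ i j, 0 ≤ U i j + t * Z i j := by
    simp only [Filter.eventually_all]
    intro i j
    by_cases hZij : Z i j = 0
    · exact Filter.Eventually.of_forall fun t => by simp [hZij, hU.1 i j]
    · have hcont : Continuous fun t : ℝ => U i j + t * Z i j := by fun_prop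
      exact ((hcont.tendsto 0).eventually (lt_mem_nhds (by simpa using hsupp i j hZij))).mono
        fun _ h => h.le
  obtain ⟨δ, hδ, hball⟩ := Metric.eventually_nhds_iff.mp hev
  have hmem : ∀ t, |t| < δ → U + t • Z ∈ Coupling P Q := fun t ht =>
    add_smul_mem_coupling hU hrow hcol (hball (by simpa using ht))
  have hseg : U ∈ openSegment ℝ (U + (δ / 2) • Z) (U + (-(δ / 2)) • Z) :=
    ⟨1 / 2, 1 / 2, by norm_num, by norm_num, by norm_num, by module⟩
  intro hext
  have hfix := hext.2 (hmem _ (by rw [abs_of_pos (half_pos hδ)]; linarith))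
    (hmem _ (by rw [abs_neg, abs_of_pos (half_pos hδ)]; linarith)) hseg
  rcases smul_eq_zero.mp (add_eq_left.mp hfix) with h | h
  · linarith
  · exact hZ h

lemma mem_extremePoints_coupling_of_isAcyclic (hU : U ∈ Coupling P Q)
    (hE : (bipGraph (supp2 U)).IsAcyclic) : U ∈ (Coupling P Q).extremePoints ℝ := by
  refine ⟨hU, fun X hX Y hY ⟨a, b, ha, hb, hab, hUab⟩ => ?_⟩
  have hUij (i j) : a * X i j + b * Y i j = U i j := congr_fun (congr_fun hUab i) j
  have hsupp (i j) (h : (X - Y) i j ≠ 0) : (i, j) ∈ supp2 U := by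
    by_contra hnot
    have hU0 : U i j ≤ 0 := not_lt.mp hnot
    have hX0 : X i j = 0 := by nlinarith [hX.1 i j, hY.1 i j, hUij i j]
    have hY0 : Y i j = 0 := by nlinarith [hX.1 i j, hY.1 i j, hUij i j]
    simp [hX0, hY0] at h
  have hXY : X - Y = 0 := eq_zero_of_isAcyclic hE hsupp
    (fun i => by simp [Finset.sum_sub_distrib, hX.2.1, hY.2.1])
    (fun j => by simp [Finset.sum_sub_distrib, hX.2.2, hY.2.2])
  rw [sub_eq_zero] at hXY
  subst hXY
  have hUX : U ∈ openSegment ℝ X X := ⟨a, b, ha, hb, hab, hUab⟩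
  rw [openSegment_same] at hUX
  exact hUX.symm

end Coupling

theorem stmt8_general {n m : ℕ} (P : Fin n → ℝ) (Q : Fin m → ℝ)
    (U : Fin n → Fin m → ℝ) (hU : U ∈ Coupling P Q) :
    U ∈ (Coupling P Q).extremePoints ℝ ↔ (bipGraph (supp2 U)).IsAcyclic := by
  refine ⟨fun hext => ?_, mem_extremePoints_coupling_of_isAcyclic hU⟩
  by_contra hcyc
  obtain ⟨Z, hrow, hcol, hsupp, hZ⟩ := exists_circulation_of_not_isAcyclic hcyc
  exact notMem_extremePoints_coupling hU hrow hcol hsupp hZ hext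

theorem stmt8 {n m : ℕ} (P : Fin n → ℝ) (Q : Fin m → ℝ)
    (hP : IsProbVec P) (hQ : IsProbVec Q)
    (U : Fin n → Fin m → ℝ) (hU : U ∈ Coupling P Q) :
    U ∈ (Coupling P Q).extremePoints ℝ ↔ (bipGraph (supp2 U)).IsAcyclic :=
  stmt8_general P Q U hU
end

section
/- If the bipartite graph of the support of a matrix in 𝒞(P,Q) is a forest, then that matrix is the unique element of 𝒞(P,Q) with support contained in that forest's edge set; i.e., two elements of 𝒞(P,Q) whose supports are both contained in a common acyclic edge set are equal. -/
/-
Two couplings `S, T` with the same margins differ by `D = S - T`, whose row and column sums vanish.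
Every edge of the support of `D` can therefore be continued at both ends: a nonzero entry in a row
or column with zero sum is balanced by another nonzero entry in it. In a finite forest this is
impossible, since the end of a longest path is a leaf; so `D` has no support and `S = T`.
-/

open Finset Filter Topology

namespace SimpleGraph

variable {V : Type*} {G : SimpleGraph V}

theorem IsAcyclic.eq_bot_of_forall_adj_exists_adj_ne [Finite V] (hG : G.IsAcyclic)
    (hcont : ∀ ⦃v w⦄, G.Adj v w → ∃ u, G.Adj w u ∧ u ≠ v) : G = ⊥ := by
  by_contra hne
  obtain ⟨x, y, hxy⟩ := G.ne_bot_iff_exists_adj.mp hne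
  have : Nonempty V := ⟨x⟩
  obtain ⟨u, v, p, hp, hlongest⟩ := Walk.exists_isPath_forall_isPath_length_le_length G
  have hnil : ¬p.Nil := by
    intro hnil
    have := hlongest _ _ _ (Walk.IsPath.of_adj hxy)
    simp [hnil.length_eq_zero] at this
  obtain ⟨w, huw, hw⟩ := hcont (p.adj_snd hnil).symm
  by_cases hwp : w ∈ p.support
  · exact hw (hG.eq_snd_of_adj_start hp huw hwp)
  · have := hlongest _ _ _ (hp.cons hwp (h := huw.symm))
    simp at this

end SimpleGraph

theorem Fintype.exists_ne_and_ne_zero_of_sum_eq_zero {α M : Type*} [Fintype α]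
    [AddCommMonoid M] {g : α → M} (hsum : ∑ x, g x = 0) {a : α} (ha : g a ≠ 0) :
    ∃ b, g b ≠ 0 ∧ b ≠ a := by
  by_contra! hrest
  exact ha (hsum ▸ (Fintype.sum_eq_single a fun b hb => by_contra fun h => hb (hrest b h)).symm)

theorem bipGraph_mono {n m : ℕ} {E F : Set (Fin n × Fin m)} (hEF : E ⊆ F) :
    bipGraph E ≤ bipGraph F := by
  rintro u v ⟨i, j, hij, h⟩
  exact ⟨i, j, hEF hij, h⟩

theorem eq_zero_of_isAcyclic_support_of_sum_eq_zero {n m : ℕ} {M : Type*} [AddCommMonoid M]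
    {D : Fin n → Fin m → M} (hD : (bipGraph {p | D p.1 p.2 ≠ 0}).IsAcyclic)
    (hrow : ∀ i, ∑ j, D i j = 0) (hcol : ∀ j, ∑ i, D i j = 0) : D = 0 := by
  have hbot : bipGraph {p | D p.1 p.2 ≠ 0} = ⊥ := by
    refine hD.eq_bot_of_forall_adj_exists_adj_ne ?_
    rintro x y ⟨i, j, hij, ⟨rfl, rfl⟩ | ⟨rfl, rfl⟩⟩
    · obtain ⟨i', hi', hne⟩ := Fintype.exists_ne_and_ne_zero_of_sum_eq_zero (hcol j) hij
      exact ⟨.inl i', ⟨i', j, hi', .inr ⟨rfl, rfl⟩⟩, by simpa using hne⟩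
    · obtain ⟨j', hj', hne⟩ := Fintype.exists_ne_and_ne_zero_of_sum_eq_zero (hrow i) hij
      exact ⟨.inr j', ⟨i, j', hj', .inl ⟨rfl, rfl⟩⟩, by simpa using hne⟩
  funext i j
  by_contra hij
  have hadj : (bipGraph {p | D p.1 p.2 ≠ 0}).Adj (.inl i) (.inr j) :=
    ⟨i, j, hij, .inl ⟨rfl, rfl⟩⟩
  simp [hbot] at hadj

theorem stmt9_general {n m : ℕ} (P : Fin n → ℝ) (Q : Fin m → ℝ)
    (E : Set (Fin n × Fin m)) (hE : (bipGraph E).IsAcyclic)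
    (S T : Fin n → Fin m → ℝ) (hS : S ∈ Coupling P Q) (hT : T ∈ Coupling P Q)
    (hSE : supp2 S ⊆ E) (hTE : supp2 T ⊆ E) : S = T := by
  obtain ⟨hS0, hSrow, hScol⟩ := hS
  obtain ⟨hT0, hTrow, hTcol⟩ := hT
  have hsupp : {p : Fin n × Fin m | (S - T) p.1 p.2 ≠ 0} ⊆ E := by
    rintro ⟨i, j⟩ hij
    by_cases hSij : S i j = 0
    · refine hTE (lt_of_le_of_ne (hT0 i j) (Ne.symm fun hTij => hij ?_))
      simp [hSij, hTij]
    · exact hSE (lt_of_le_of_ne (hS0 i j) (Ne.symm hSij))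
  have hdiff : S - T = 0 :=
    eq_zero_of_isAcyclic_support_of_sum_eq_zero (hE.anti (bipGraph_mono hsupp))
      (fun i => by simp [sum_sub_distrib, hSrow, hTrow])
      (fun j => by simp [sum_sub_distrib, hScol, hTcol])
  exact sub_eq_zero.mp hdiff

theorem stmt9 {n m : ℕ} (P : Fin n → ℝ) (Q : Fin m → ℝ)
    (hP : IsProbVec P) (hQ : IsProbVec Q)
    (E : Set (Fin n × Fin m)) (hE : (bipGraph E).IsAcyclic)
    (S T : Fin n → Fin m → ℝ) (hS : S ∈ Coupling P Q) (hT : T ∈ Coupling P Q)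
    (hSE : supp2 S ⊆ E) (hTE : supp2 T ⊆ E) : S = T :=
  stmt9_general P Q E hE S T hS hT hSE hTE
end

section
/- The I-projection map from 𝒞(P_1,Q_1) to 𝒞(P_2,Q_2) is continuous on its domain: if S_n → S in ℓ_1, all within the domain of the I-projection, then I_proj(S_n) → I_proj(S). -/
open Finset Filter Topology

/-!
The I-projections `T k` all lie in the compact polytope `𝒞(P₂, Q₂)`, so it suffices to show that
every cluster point `T'` of them is the I-projection of `Slim`; uniqueness of the I-projection
(strict convexity of `D(· ‖ S)`) then forces `T' = Tlim`. Along a filter on which `T k → T'`,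
every admissible `U` satisfies `D(T k ‖ S k) ≤ D(U ‖ S k) → D(U ‖ Slim)` (the support of `Slim` is
eventually contained in that of `S k`), and `D` is jointly lower semicontinuous, with value `+∞`
when `supp T' ⊄ supp Slim`. Hence `supp T' ⊆ supp Slim` and `D(T' ‖ Slim) ≤ D(U ‖ Slim)`.
-/

open Real

section MulLogDiv

variable {ι : Type*} {l : Filter ι}

lemma sub_le_mul_log_div {t s : ℝ} (ht : 0 ≤ t) (hs : 0 ≤ s) (hts : 0 < t → 0 < s) :
    t - s ≤ t * log (t / s) := by
  rcases ht.eq_or_lt with rfl | ht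
  · simpa using hs
  · have hs := hts ht
    have := one_sub_inv_le_log_of_pos (div_pos ht hs)
    rw [inv_div] at this
    calc t - s = t * (1 - s / t) := by field_simp
      _ ≤ t * log (t / s) := by gcongr

lemma strictConvexOn_mul_log_div {s : ℝ} (hs : 0 < s) :
    StrictConvexOn ℝ (Set.Ici 0) fun x => x * log (x / s) := by
  refine (strictConvexOn_mul_log.add_convexOn
    ((LinearMap.mul ℝ ℝ (-log s)).convexOn (convex_Ici 0))).congr fun x hx => ?_
  rcases (Set.mem_Ici.1 hx).eq_or_lt with rfl | hx
  · simp
  · simp only [Pi.add_apply, LinearMap.mul_apply', log_div hx.ne' hs.ne']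
    ring

lemma tendsto_mul_log_div {f g : ι → ℝ} {t s : ℝ} (hf : Tendsto f l (𝓝 t))
    (hg : Tendsto g l (𝓝 s)) (hs : s ≠ 0) :
    Tendsto (fun k => f k * log (f k / g k)) l (𝓝 (t * log (t / s))) := by
  -- `x log (x / y) = y · φ (x / y)` with `φ x = x log x` continuous, as soon as `y ≠ 0`
  have h := hg.mul ((continuous_mul_log.tendsto _).comp (hf.div hg hs))
  rw [← mul_assoc, mul_div_cancel₀ _ hs] at h
  refine h.congr' ((hg.eventually_ne hs).mono fun k hk => ?_)
  simp only [Function.comp_apply, Pi.div_apply, ← mul_assoc, mul_div_cancel₀ _ hk]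

lemma tendsto_mul_log_div_atTop {f g : ι → ℝ} {t : ℝ} (hf : Tendsto f l (𝓝 t))
    (ht : 0 < t) (hg : Tendsto g l (𝓝 0)) (hfg : ∀ k, 0 < f k → 0 < g k) :
    Tendsto (fun k => f k * log (f k / g k)) l atTop := by
  have hg' : Tendsto g l (𝓝[>] 0) := tendsto_nhdsWithin_iff.2
    ⟨hg, (hf.eventually (eventually_gt_nhds ht)).mono fun k hk => hfg k hk⟩
  exact hf.pos_mul_atTop ht
    (tendsto_log_atTop.comp (hf.pos_mul_atTop ht (tendsto_inv_nhdsGT_zero.comp hg')))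

end MulLogDiv

section RelEntropy

variable {α ι : Type*} [Fintype α] {l : Filter ι}

/-- Only meaningful when `supp t ⊆ supp s`: otherwise the junk value `log (x / 0) = 0` replaces
the infinite terms by `0`. -/
noncomputable def relEntropy (t s : α → ℝ) : ℝ :=
  ∑ a, t a * log (t a / s a)

omit [Fintype α] in
lemma convex_setOf_supp_subset (s : α → ℝ) : Convex ℝ {t : α → ℝ | supp t ⊆ supp s} := by
  intro x hx y hy a b ha hb _ c hc
  by_contra hsc
  have hx0 : x c ≤ 0 := not_lt.1 fun h => hsc (hx h)
  have hy0 : y c ≤ 0 := not_lt.1 fun h => hsc (hy h)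
  exact (show a * x c + b * y c ≤ 0 by nlinarith).not_gt hc

lemma strictConvexOn_relEntropy (s : α → ℝ) :
    StrictConvexOn ℝ {t | 0 ≤ t ∧ supp t ⊆ supp s} (relEntropy · s) := by
  refine ⟨(convex_Ici 0).inter (convex_setOf_supp_subset s), ?_⟩
  rintro x ⟨hx0, hx⟩ y ⟨hy0, hy⟩ hxy a b ha hb hab
  have hvanish : ∀ t : α → ℝ, 0 ≤ t → supp t ⊆ supp s → ∀ c, ¬ 0 < s c → t c = 0 :=
    fun t ht0 ht c hc => le_antisymm (not_lt.1 fun h => hc (ht h)) (ht0 c)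
  obtain ⟨c₀, hc₀⟩ : ∃ c, x c ≠ y c := Function.ne_iff.1 hxy
  simp only [relEntropy, smul_eq_mul, Finset.mul_sum, ← Finset.sum_add_distrib, Pi.add_apply,
    Pi.smul_apply]
  refine Finset.sum_lt_sum (fun c _ => ?_) ⟨c₀, mem_univ c₀, ?_⟩
  · by_cases hsc : 0 < s c
    · exact (strictConvexOn_mul_log_div hsc).convexOn.2 (hx0 c) (hy0 c) ha.le hb.le hab
    · simp [hvanish x hx0 hx c hsc, hvanish y hy0 hy c hsc]
  · have hsc : 0 < s c₀ := by
      by_contra hsc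
      exact hc₀ (by rw [hvanish x hx0 hx c₀ hsc, hvanish y hy0 hy c₀ hsc])
    exact (strictConvexOn_mul_log_div hsc).2 (hx0 c₀) (hy0 c₀) hc₀ ha hb hab

lemma mul_log_div_le_relEntropy_add_sum {t s : α → ℝ} (ht0 : 0 ≤ t) (hs0 : 0 ≤ s)
    (hts : supp t ⊆ supp s) (a : α) :
    t a * log (t a / s a) ≤ relEntropy t s + ∑ b, s b := by
  have hterm : ∀ b, 0 ≤ t b * log (t b / s b) + s b := fun b => by
    linarith [show (0 : ℝ) ≤ t b from ht0 b, sub_le_mul_log_div (ht0 b) (hs0 b) fun h => hts h]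
  calc t a * log (t a / s a) ≤ t a * log (t a / s a) + s a := le_add_of_nonneg_right (hs0 a)
    _ ≤ ∑ b, (t b * log (t b / s b) + s b) :=
      Finset.single_le_sum (fun b _ => hterm b) (mem_univ a)
    _ = relEntropy t s + ∑ b, s b := Finset.sum_add_distrib

lemma tendsto_relEntropy_right {u s' : α → ℝ} {s : ι → α → ℝ} (hu0 : 0 ≤ u)
    (hu : supp u ⊆ supp s') (hs : Tendsto s l (𝓝 s')) :
    Tendsto (fun k => relEntropy u (s k)) l (𝓝 (relEntropy u s')) := by
  refine tendsto_finsetSum _ fun a _ => ?_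
  rcases (hu0 a).eq_or_lt with hua | hua
  · simp [← hua, tendsto_const_nhds]
  · exact tendsto_mul_log_div tendsto_const_nhds (tendsto_pi_nhds.1 hs a) (hu hua).ne'

lemma eventually_supp_subset_of_tendsto {s' : α → ℝ} {s : ι → α → ℝ} (hs : Tendsto s l (𝓝 s')) :
    ∀ᶠ k in l, supp s' ⊆ supp (s k) := by
  have hpt : ∀ a, ∀ᶠ k in l, 0 < s' a → 0 < s k a := fun a => by
    by_cases ha : 0 < s' a
    · exact ((tendsto_pi_nhds.1 hs a).eventually (eventually_gt_nhds ha)).mono fun _ h _ => h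
    · exact Eventually.of_forall fun _ h => absurd h ha
  exact (Filter.eventually_all.2 hpt).mono fun k hk a => hk a

lemma tendsto_relEntropy_atTop {t s : ι → α → ℝ} {t' s' : α → ℝ} (ht0 : ∀ k, 0 ≤ t k)
    (hs0 : ∀ k, 0 ≤ s k) (hts : ∀ k, supp (t k) ⊆ supp (s k)) (ht : Tendsto t l (𝓝 t'))
    (hs : Tendsto s l (𝓝 s')) {a : α} (ht'a : 0 < t' a) (hs'a : s' a = 0) :
    Tendsto (fun k => relEntropy (t k) (s k)) l atTop := by
  have hterm : Tendsto (fun k => t k a * log (t k a / s k a)) l atTop :=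
    tendsto_mul_log_div_atTop (tendsto_pi_nhds.1 ht a) ht'a (hs'a ▸ tendsto_pi_nhds.1 hs a)
      fun k h => hts k h
  have hsum : Tendsto (fun k => -∑ b, s k b) l (𝓝 (-∑ b, s' b)) :=
    (tendsto_finsetSum _ fun b _ => tendsto_pi_nhds.1 hs b).neg
  refine tendsto_atTop_mono (fun k => ?_) (hterm.atTop_add hsum)
  linarith [mul_log_div_le_relEntropy_add_sum (ht0 k) (hs0 k) (hts k) a]

lemma supp_subset_and_relEntropy_le_of_tendsto [l.NeBot] {t s : ι → α → ℝ} {t' s' : α → ℝ}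
    {c : ι → ℝ} {c' : ℝ} (ht0 : ∀ k, 0 ≤ t k) (hs0 : ∀ k, 0 ≤ s k)
    (hts : ∀ k, supp (t k) ⊆ supp (s k)) (ht : Tendsto t l (𝓝 t')) (hs : Tendsto s l (𝓝 s'))
    (hc : Tendsto c l (𝓝 c')) (hle : ∀ᶠ k in l, relEntropy (t k) (s k) ≤ c k) :
    supp t' ⊆ supp s' ∧ relEntropy t' s' ≤ c' := by
  have hs'0 : 0 ≤ s' := ge_of_tendsto' hs hs0
  have hsupp : supp t' ⊆ supp s' := by
    intro a (ha : 0 < t' a)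
    by_contra hs'a
    exact not_tendsto_atTop_of_tendsto_nhds hc <| tendsto_atTop_mono' l hle <|
      tendsto_relEntropy_atTop ht0 hs0 hts ht hs ha (le_antisymm (not_lt.1 hs'a) (hs'0 a))
  refine ⟨hsupp, ?_⟩
  -- off `supp s'`, where `t' = s' = 0`, bound the terms below by `t - s`, which tends to `0`
  let g : ι → α → ℝ := fun k a =>
    if 0 < s' a then t k a * log (t k a / s k a) else t k a - s k a
  have hg : Tendsto (fun k => ∑ a, g k a) l (𝓝 (relEntropy t' s')) := by
    refine tendsto_finsetSum _ fun a _ => ?_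
    have hta := tendsto_pi_nhds.1 ht a
    have hsa := tendsto_pi_nhds.1 hs a
    by_cases ha : 0 < s' a
    · simpa only [g, ha, if_true] using tendsto_mul_log_div hta hsa ha.ne'
    · have ht'a : t' a = 0 :=
        le_antisymm (not_lt.1 fun h => ha (hsupp h)) (ge_of_tendsto' ht ht0 a)
      have hs'a : s' a = 0 := le_antisymm (not_lt.1 ha) (hs'0 a)
      simpa [g, ha, ht'a, hs'a] using hta.sub hsa
  refine le_of_tendsto_of_tendsto hg hc (hle.mono fun k hk => le_trans ?_ hk)
  refine Finset.sum_le_sum fun a _ => ?_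
  by_cases ha : 0 < s' a
  · simp only [g, ha, if_true, le_refl]
  · simpa only [g, ha, if_false] using sub_le_mul_log_div (ht0 k a) (hs0 k a) fun h => hts k h

end RelEntropy

lemma StrictConvexOn.comp_linearEquiv {𝕜 E F β : Type*} [Semiring 𝕜] [PartialOrder 𝕜]
    [AddCommMonoid E] [AddCommMonoid F] [Module 𝕜 E] [Module 𝕜 F] [AddCommMonoid β]
    [PartialOrder β] [SMul 𝕜 β] {f : F → β} {s : Set F} (hf : StrictConvexOn 𝕜 s f)
    (e : E ≃ₗ[𝕜] F) : StrictConvexOn 𝕜 (e ⁻¹' s) (f ∘ e) :=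
  ⟨hf.1.linear_preimage e.toLinearMap, fun x hx y hy hxy a b ha hb hab => by
    simpa only [Function.comp_apply, map_add, map_smul] using
      hf.2 hx hy (e.injective.ne hxy) ha hb hab⟩

lemma tendsto_iff_tendsto_sum_sum_abs_sub {ι α β : Type*} [Fintype α] [Fintype β]
    {l : Filter ι} {F : ι → α → β → ℝ} {G : α → β → ℝ} :
    Tendsto F l (𝓝 G) ↔ Tendsto (fun k => ∑ i, ∑ j, |F k i j - G i j|) l (𝓝 0) := by
  constructor
  · intro h
    have hc : Continuous fun H : α → β → ℝ => ∑ i, ∑ j, |H i j - G i j| := by fun_prop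
    simpa [Function.comp_def] using (hc.tendsto G).comp h
  · intro h
    refine tendsto_pi_nhds.2 fun i => tendsto_pi_nhds.2 fun j => ?_
    rw [tendsto_iff_norm_sub_tendsto_zero]
    refine squeeze_zero (fun k => norm_nonneg _) (fun k => ?_) h
    calc ‖F k i j - G i j‖ = |F k i j - G i j| := Real.norm_eq_abs _
      _ ≤ ∑ j', |F k i j' - G i j'| :=
        single_le_sum (f := fun j' => |F k i j' - G i j'|) (fun _ _ => abs_nonneg _) (mem_univ j)
      _ ≤ ∑ i', ∑ j', |F k i' j' - G i' j'| :=
        single_le_sum (f := fun i' => ∑ j', |F k i' j' - G i' j'|)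
          (fun _ _ => sum_nonneg fun _ _ => abs_nonneg _) (mem_univ i)

section Coupling

variable {n m : ℕ}

lemma D2_eq_relEntropy (T S : Fin n → Fin m → ℝ) :
    D2 T S = relEntropy (Function.uncurry T) (Function.uncurry S) :=
  (Fintype.sum_prod_type' _).symm

lemma convex_coupling (P : Fin n → ℝ) (Q : Fin m → ℝ) : Convex ℝ (Coupling P Q) := by
  intro x hx y hy a b ha hb hab
  refine ⟨fun i j => ?_, fun i => ?_, fun j => ?_⟩
  · have hx0 := hx.1 i j
    have hy0 := hy.1 i j
    simp only [Pi.add_apply, Pi.smul_apply, smul_eq_mul]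
    positivity
  · simp only [Pi.add_apply, Pi.smul_apply, smul_eq_mul, sum_add_distrib, ← mul_sum, hx.2.1 i,
      hy.2.1 i, ← add_mul, hab, one_mul]
  · simp only [Pi.add_apply, Pi.smul_apply, smul_eq_mul, sum_add_distrib, ← mul_sum, hx.2.2 j,
      hy.2.2 j, ← add_mul, hab, one_mul]

lemma isCompact_coupling (P : Fin n → ℝ) (Q : Fin m → ℝ) : IsCompact (Coupling P Q) := by
  have hclosed : IsClosed (Coupling P Q) := by
    simp only [Coupling, Set.ofPred_and, Set.ofPred_forall]
    refine (isClosed_iInter fun i => isClosed_iInter fun j => isClosed_le continuous_const ?_).inter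
      ((isClosed_iInter fun i => isClosed_eq ?_ continuous_const).inter
        (isClosed_iInter fun j => isClosed_eq ?_ continuous_const)) <;> fun_prop
  exact (isCompact_Icc (a := 0) (b := fun i _ => P i)).of_isClosed_subset hclosed fun S hS =>
    ⟨fun i j => hS.1 i j,
      fun i j => (hS.2.1 i).le.trans' (single_le_sum (fun j _ => hS.1 i j) (mem_univ j))⟩

lemma IsIProj.unique {S T₁ T₂ : Fin n → Fin m → ℝ} {𝒯 : Set (Fin n → Fin m → ℝ)}
    (h𝒯 : Convex ℝ 𝒯) (h𝒯0 : ∀ T ∈ 𝒯, 0 ≤ T) (h₁ : IsIProj S 𝒯 T₁) (h₂ : IsIProj S 𝒯 T₂) :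
    T₁ = T₂ := by
  let e := (LinearEquiv.curry ℝ ℝ (Fin n) (Fin m)).symm
  let K := 𝒯 ∩ {T | supp2 T ⊆ supp2 S}
  have hK : Convex ℝ K :=
    h𝒯.inter ((convex_setOf_supp_subset (Function.uncurry S)).linear_preimage e.toLinearMap)
  have hf : StrictConvexOn ℝ K (fun T => D2 T S) := by
    simp only [D2_eq_relEntropy]
    exact ((strictConvexOn_relEntropy _).comp_linearEquiv e).subset
      (fun T hT => ⟨fun p => h𝒯0 T hT.1 p.1 p.2, hT.2⟩) hK
  exact hf.eq_of_isMinOn (fun T hT => h₁.2.2 T hT.1 hT.2) (fun T hT => h₂.2.2 T hT.1 hT.2)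
    ⟨h₁.1, h₁.2.1⟩ ⟨h₂.1, h₂.2.1⟩

lemma IsIProj.of_tendsto {ι : Type*} {l : Filter ι} [l.NeBot] {𝒯 : Set (Fin n → Fin m → ℝ)}
    (h𝒯 : IsClosed 𝒯) (h𝒯0 : ∀ T ∈ 𝒯, 0 ≤ T) {S T : ι → Fin n → Fin m → ℝ}
    {S' T' : Fin n → Fin m → ℝ} (hS0 : ∀ k, 0 ≤ S k) (hS : Tendsto S l (𝓝 S'))
    (hT : ∀ k, IsIProj (S k) 𝒯 (T k)) (hT' : Tendsto T l (𝓝 T'))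
    (hdom : ∃ U ∈ 𝒯, supp2 U ⊆ supp2 S') :
    IsIProj S' 𝒯 T' := by
  have huncurry : Continuous (Function.uncurry : (Fin n → Fin m → ℝ) → Fin n × Fin m → ℝ) :=
    continuous_pi fun p => (continuous_apply p.2).comp (continuous_apply p.1)
  have hSu := (huncurry.tendsto S').comp hS
  have key : ∀ U ∈ 𝒯, supp2 U ⊆ supp2 S' → supp2 T' ⊆ supp2 S' ∧ D2 T' S' ≤ D2 U S' := by
    intro U hU hUS
    simp only [D2_eq_relEntropy]
    refine supp_subset_and_relEntropy_le_of_tendsto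
      (fun k p => h𝒯0 _ (hT k).1 p.1 p.2) (fun k p => hS0 k p.1 p.2) (fun k => (hT k).2.1)
      ((huncurry.tendsto T').comp hT') hSu
      (tendsto_relEntropy_right (fun p => h𝒯0 U hU p.1 p.2) hUS hSu) ?_
    filter_upwards [eventually_supp_subset_of_tendsto hSu] with k hk
    have hmin := (hT k).2.2 U hU (hUS.trans hk)
    rwa [D2_eq_relEntropy, D2_eq_relEntropy] at hmin
  obtain ⟨U, hU, hUS⟩ := hdom
  exact ⟨h𝒯.mem_of_tendsto hT' (Eventually.of_forall fun k => (hT k).1), (key U hU hUS).1,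
    fun V hV hVS => (key V hV hVS).2⟩

end Coupling

theorem stmt10_general {n m : ℕ} (P₁ P₂ : Fin n → ℝ) (Q₁ Q₂ : Fin m → ℝ)
    (S : ℕ → Fin n → Fin m → ℝ) (Slim : Fin n → Fin m → ℝ)
    (hS : ∀ k, S k ∈ Coupling P₁ Q₁)
    (T : ℕ → Fin n → Fin m → ℝ) (Tlim : Fin n → Fin m → ℝ)
    (hT : ∀ k, IsIProj (S k) (Coupling P₂ Q₂) (T k))
    (hTlim : IsIProj Slim (Coupling P₂ Q₂) Tlim)
    (hconv : Tendsto (fun k => ∑ i, ∑ j, |S k i j - Slim i j|) atTop (𝓝 0)) :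
    Tendsto (fun k => ∑ i, ∑ j, |T k i j - Tlim i j|) atTop (𝓝 0) := by
  have hS' : Tendsto S atTop (𝓝 Slim) := tendsto_iff_tendsto_sum_sum_abs_sub.2 hconv
  refine tendsto_iff_tendsto_sum_sum_abs_sub.1 <|
    (isCompact_coupling P₂ Q₂).tendsto_nhds_of_unique_mapClusterPt
      (Eventually.of_forall fun k => (hT k).1) fun T' _ hT' => ?_
  obtain ⟨U, hU, hTU⟩ := mapClusterPt_iff_ultrafilter.1 hT'
  have hT'proj : IsIProj Slim (Coupling P₂ Q₂) T' :=
    IsIProj.of_tendsto (isCompact_coupling P₂ Q₂).isClosed (fun _ hT => hT.1)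
      (fun k => (hS k).1) (hS'.mono_left hU) hT hTU ⟨Tlim, hTlim.1, hTlim.2.1⟩
  exact hT'proj.unique (convex_coupling P₂ Q₂) (fun _ hT => hT.1) hTlim

theorem stmt10 {n m : ℕ} (P₁ P₂ : Fin n → ℝ) (Q₁ Q₂ : Fin m → ℝ)
    (hP₁ : IsProbVec P₁) (hQ₁ : IsProbVec Q₁) (hP₂ : IsProbVec P₂) (hQ₂ : IsProbVec Q₂)
    (S : ℕ → Fin n → Fin m → ℝ) (Slim : Fin n → Fin m → ℝ)
    (hS : ∀ k, S k ∈ Coupling P₁ Q₁) (hSlim : Slim ∈ Coupling P₁ Q₁)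
    (T : ℕ → Fin n → Fin m → ℝ) (Tlim : Fin n → Fin m → ℝ)
    (hT : ∀ k, IsIProj (S k) (Coupling P₂ Q₂) (T k))
    (hTlim : IsIProj Slim (Coupling P₂ Q₂) Tlim)
    (hconv : Tendsto (fun k => ∑ i, ∑ j, |S k i j - Slim i j|) atTop (𝓝 0)) :
    Tendsto (fun k => ∑ i, ∑ j, |T k i j - Tlim i j|) atTop (𝓝 0) :=
  stmt10_general P₁ P₂ Q₁ Q₂ S Slim hS T Tlim hT hTlim hconv
end

section
/- If S_1, S_2 ∈ 𝒞(P_1,Q_1) have the same support as their common I-projection S* onto 𝒞(P_2,Q_2) (i.e., I_proj(S_1) = I_proj(S_2) = S* and supp(S_1)=supp(S_2)=supp(S*)), then S_1 = S_2. Consequently, under geometric equivalence, the I-projection from 𝒞(P_1,Q_1) to 𝒞(P_2,Q_2) is injective. -/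
open Finset Filter Topology

/-!
Both parts rest on the first-order optimality of the I-projection `S*` of `S`. If `ε` has zero
margins and vanishes off `supp S*`, then `S* + t ε` stays in the polytope for small `|t|`, so the
derivative of `t ↦ D(S* + t ε ‖ S)` at `0` vanishes: `∑ ε log (S* / S) = 0`. For two matrices
`S₁, S₂` with the same margins, projection and support, take `ε = S₂ - S₁` and subtract the two
conditions: `∑ (S₂ - S₁) (log S₂ - log S₁) = 0`, a sum of terms that are nonnegative and vanish
only where `S₁ = S₂`.

Under geometric equivalence the support hypothesis holds automatically: if `T` lies in the target
polytope with `supp T = supp S` but charges a cell outside `supp S*` with total mass `c > 0`, then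
along the segment `(1 - t) S* + t T` the divergence is at most
`(1 - t) D(S*‖S) + t D(T‖S) + c t log t`, which undercuts `D(S*‖S)` for small `t > 0`.
-/

open Real

theorem mul_log_div_eq {s : ℝ} (hs : s ≠ 0) (x : ℝ) :
    x * log (x / s) = x * log x - x * log s := by
  rcases eq_or_ne x 0 with rfl | hx
  · simp
  · rw [log_div hx hs]; ring

theorem hasDerivAt_mul_log_div {s x : ℝ} (hs : s ≠ 0) (hx : x ≠ 0) :
    HasDerivAt (fun y ↦ y * log (y / s)) (log (x / s) + 1) x := by
  rw [funext (mul_log_div_eq hs), log_div hx hs]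
  exact ((hasDerivAt_mul_log hx).fun_sub ((hasDerivAt_id' x).mul_const (log s))).congr_deriv
    (by ring)

theorem mul_log_div_mix_le {s a b t : ℝ} (hs : 0 < s) (ha : 0 ≤ a) (hb : 0 ≤ b)
    (ht₀ : 0 < t) (ht₁ : t ≤ 1) :
    ((1 - t) * a + t * b) * log (((1 - t) * a + t * b) / s) ≤
      (1 - t) * (a * log (a / s)) + t * (b * log (b / s)) +
        t * log t * (if a = 0 then b else 0) := by
  rcases eq_or_ne a 0 with rfl | ha₀
  · rcases eq_or_ne b 0 with rfl | hb₀
    · simp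
    · rw [if_pos rfl, mul_zero, zero_add, mul_div_assoc,
        log_mul ht₀.ne' (div_ne_zero hb₀ hs.ne')]
      exact le_of_eq (by ring)
  · have hconv := convexOn_mul_log.2 (Set.mem_Ici.2 ha) (Set.mem_Ici.2 hb)
      (sub_nonneg.2 ht₁) ht₀.le (sub_add_cancel 1 t)
    simp only [smul_eq_mul] at hconv
    rw [if_neg ha₀, mul_log_div_eq hs.ne', mul_log_div_eq hs.ne', mul_log_div_eq hs.ne']
    linear_combination hconv

theorem sub_mul_log_sub_log_pos {a b : ℝ} (ha : 0 < a) (hb : 0 < b) (hab : a ≠ b) :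
    0 < (b - a) * (log b - log a) := by
  rcases hab.lt_or_gt with h | h
  · exact mul_pos (sub_pos.2 h) (sub_pos.2 (log_lt_log ha h))
  · exact mul_pos_of_neg_of_neg (sub_neg.2 h) (sub_neg.2 (log_lt_log hb h))

theorem sub_mul_log_sub_log_nonneg {a b : ℝ} (ha : 0 < a) (hb : 0 < b) :
    0 ≤ (b - a) * (log b - log a) := by
  rcases eq_or_ne a b with rfl | hab
  · simp
  · exact (sub_mul_log_sub_log_pos ha hb hab).le

theorem hasDerivAt_add_mul_mul_log_div {a e s : ℝ} (h : a ≠ 0 ∧ s ≠ 0 ∨ e = 0) :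
    HasDerivAt (fun t ↦ (a + t * e) * log ((a + t * e) / s)) (e * (log (a / s) + 1)) 0 := by
  rcases h with ⟨ha, hs⟩ | rfl
  · have hline : HasDerivAt (fun t : ℝ ↦ a + t * e) e 0 := by
      simpa using ((hasDerivAt_id' (0 : ℝ)).mul_const e).const_add a
    exact ((hasDerivAt_mul_log_div hs ha).comp_of_eq 0 hline (by simp)).congr_deriv
      (mul_comm _ _)
  · simpa using hasDerivAt_const (0 : ℝ) (a * log (a / s))

theorem sum_sum_pos {n m : ℕ} {f : Fin n → Fin m → ℝ} (hf : ∀ i j, 0 ≤ f i j) {i : Fin n}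
    {j : Fin m} (hij : 0 < f i j) : 0 < ∑ i, ∑ j, f i j := by
  rw [← Fintype.sum_prod_type']
  exact sum_pos' (fun p _ ↦ hf p.1 p.2) ⟨(i, j), mem_univ _, hij⟩

section

variable {n m : ℕ} {P : Fin n → ℝ} {Q : Fin m → ℝ} {S T T' : Fin n → Fin m → ℝ}

theorem apply_eq_zero_of_supp2_subset (hT : ∀ i j, 0 ≤ T i j) (h : supp2 T ⊆ supp2 S)
    {i : Fin n} {j : Fin m} (hS : ¬ 0 < S i j) : T i j = 0 :=
  le_antisymm (not_lt.1 fun hT' ↦ hS (h (show (i, j) ∈ supp2 T from hT'))) (hT i j)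

theorem D2_mix_le (hT'S : supp2 T' ⊆ supp2 S) (hTS : supp2 T ⊆ supp2 S)
    (hT' : ∀ i j, 0 ≤ T' i j) (hT : ∀ i j, 0 ≤ T i j) {t : ℝ} (ht₀ : 0 < t) (ht₁ : t ≤ 1) :
    D2 (fun i j ↦ (1 - t) * T' i j + t * T i j) S ≤
      (1 - t) * D2 T' S + t * D2 T S +
        t * log t * ∑ i, ∑ j, (if T' i j = 0 then T i j else 0) := by
  calc D2 (fun i j ↦ (1 - t) * T' i j + t * T i j) S
      ≤ ∑ i, ∑ j, ((1 - t) * (T' i j * log (T' i j / S i j)) +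
          t * (T i j * log (T i j / S i j)) + t * log t * (if T' i j = 0 then T i j else 0)) := by
        refine sum_le_sum fun i _ ↦ sum_le_sum fun j _ ↦ ?_
        by_cases hS : 0 < S i j
        · exact mul_log_div_mix_le hS (hT' i j) (hT i j) ht₀ ht₁
        · simp [apply_eq_zero_of_supp2_subset hT' hT'S hS,
            apply_eq_zero_of_supp2_subset hT hTS hS]
    _ = _ := by simp only [D2, sum_add_distrib, mul_sum]

namespace IsIProj

theorem supp2_subset (h : IsIProj S (Coupling P Q) T') (hT : T ∈ Coupling P Q)
    (hTS : supp2 T ⊆ supp2 S) : supp2 T ⊆ supp2 T' := by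
  obtain ⟨⟨hT'nn, hT'row, hT'col⟩, hT'S, hmin⟩ := h
  obtain ⟨hTnn, hTrow, hTcol⟩ := hT
  intro p hp
  by_contra hp'
  set c := ∑ i, ∑ j, (if T' i j = 0 then T i j else 0)
  have hc : 0 < c := by
    refine sum_sum_pos (fun i j ↦ ?_) (i := p.1) (j := p.2) ?_
    · split_ifs <;> simp [hTnn]
    · rwa [if_pos (apply_eq_zero_of_supp2_subset hT'nn subset_rfl hp')]
  have hbound : ∀ t ∈ Set.Ioc (0 : ℝ) 1, D2 T' S - D2 T S ≤ c * log t := by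
    rintro t ⟨ht₀, ht₁⟩
    have hmix : (fun i j ↦ (1 - t) * T' i j + t * T i j) ∈ Coupling P Q := by
      refine ⟨fun i j ↦ ?_, fun i ↦ ?_, fun j ↦ ?_⟩
      · have := hT'nn i j; have := hTnn i j; nlinarith
      · simp only [sum_add_distrib, ← mul_sum, hT'row, hTrow]; ring
      · simp only [sum_add_distrib, ← mul_sum, hT'col, hTcol]; ring
    have hmixS : supp2 (fun i j ↦ (1 - t) * T' i j + t * T i j) ⊆ supp2 S := by
      intro q hq
      by_contra hS
      have h₁ := apply_eq_zero_of_supp2_subset hT'nn hT'S hS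
      have h₂ := apply_eq_zero_of_supp2_subset hTnn hTS hS
      simp [supp2, h₁, h₂] at hq
    have := (hmin _ hmix hmixS).trans (D2_mix_le hT'S hTS hT'nn hTnn ht₀ ht₁)
    nlinarith
  have hlim : Tendsto (fun t ↦ c * log t) (𝓝[>] 0) atBot :=
    tendsto_log_nhdsGT_zero.const_mul_atBot hc
  obtain ⟨t, hlt, ht⟩ := ((hlim.eventually (eventually_lt_atBot (D2 T' S - D2 T S))).and
    (Ioc_mem_nhdsGT zero_lt_one)).exists
  linarith [hbound t ht]

theorem sum_mul_log_div_eq_zero (h : IsIProj S (Coupling P Q) T') {ε : Fin n → Fin m → ℝ}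
    (hrow : ∀ i, ∑ j, ε i j = 0) (hcol : ∀ j, ∑ i, ε i j = 0)
    (hε : ∀ i j, T' i j = 0 → ε i j = 0) :
    ∑ i, ∑ j, ε i j * log (T' i j / S i j) = 0 := by
  obtain ⟨⟨hT'nn, hT'row, hT'col⟩, hT'S, hmin⟩ := h
  have hnonneg : ∀ᶠ t in 𝓝 (0 : ℝ), ∀ i j, 0 ≤ T' i j + t * ε i j := by
    simp only [eventually_all]
    intro i j
    rcases (hT'nn i j).eq_or_lt with h0 | hpos
    · simp [hε i j h0.symm, ← h0]
    · have hline : Tendsto (fun t ↦ T' i j + t * ε i j) (𝓝 0) (𝓝 (T' i j)) :=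
        (continuous_const.add (continuous_id.mul continuous_const)).tendsto' 0 _ (by simp)
      exact (hline.eventually_const_lt hpos).mono fun t ht ↦ ht.le
  have hlocalMin : IsLocalMin (fun t ↦ D2 (fun i j ↦ T' i j + t * ε i j) S) 0 := by
    filter_upwards [hnonneg] with t ht
    simp only [zero_mul, add_zero]
    refine hmin _ ⟨ht, fun i ↦ ?_, fun j ↦ ?_⟩ fun q hq ↦ hT'S ?_
    · simp [sum_add_distrib, ← mul_sum, hrow, hT'row]
    · simp [sum_add_distrib, ← mul_sum, hcol, hT'col]
    · by_contra hq'
      have h0 := apply_eq_zero_of_supp2_subset hT'nn subset_rfl hq'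
      simp [supp2, h0, hε _ _ h0] at hq
  have hderiv : HasDerivAt (fun t ↦ D2 (fun i j ↦ T' i j + t * ε i j) S)
      (∑ i, ∑ j, ε i j * (log (T' i j / S i j) + 1)) 0 := by
    refine HasDerivAt.fun_sum fun i _ ↦ HasDerivAt.fun_sum fun j _ ↦
      hasDerivAt_add_mul_mul_log_div ?_
    rcases (hT'nn i j).eq_or_lt with h0 | hpos
    · exact .inr (hε i j h0.symm)
    · exact .inl ⟨hpos.ne', (hT'S (show (i, j) ∈ supp2 T' from hpos)).ne'⟩
  simpa [mul_add, sum_add_distrib, hrow] using hlocalMin.hasDerivAt_eq_zero hderiv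

theorem supp2_eq (h : IsIProj S (Coupling P Q) T') (hS : ∃ T ∈ Coupling P Q, supp2 T = supp2 S) :
    supp2 S = supp2 T' := by
  obtain ⟨T, hT, hTS⟩ := hS
  refine subset_antisymm ?_ h.2.1
  rw [← hTS]
  exact h.supp2_subset hT hTS.le

end IsIProj

theorem eq_of_isIProj_of_supp2_eq {P' : Fin n → ℝ} {Q' : Fin m → ℝ} {S₁ S₂ : Fin n → Fin m → ℝ}
    (h₁ : S₁ ∈ Coupling P Q) (h₂ : S₂ ∈ Coupling P Q)
    (hp₁ : IsIProj S₁ (Coupling P' Q') T') (hp₂ : IsIProj S₂ (Coupling P' Q') T')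
    (hs₁ : supp2 S₁ = supp2 T') (hs₂ : supp2 S₂ = supp2 T') : S₁ = S₂ := by
  obtain ⟨h₁nn, h₁row, h₁col⟩ := h₁
  obtain ⟨h₂nn, h₂row, h₂col⟩ := h₂
  have hzero : ∀ i j, ¬ 0 < T' i j → S₁ i j = 0 ∧ S₂ i j = 0 := fun i j h ↦
    ⟨apply_eq_zero_of_supp2_subset h₁nn hs₁.le h, apply_eq_zero_of_supp2_subset h₂nn hs₂.le h⟩
  have hpos : ∀ i j, 0 < T' i j → 0 < S₁ i j ∧ 0 < S₂ i j := fun i j h ↦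
    ⟨hs₁.ge (show (i, j) ∈ supp2 T' from h), hs₂.ge (show (i, j) ∈ supp2 T' from h)⟩
  have hrow : ∀ i, ∑ j, (S₂ i j - S₁ i j) = 0 := by simp [sum_sub_distrib, h₁row, h₂row]
  have hcol : ∀ j, ∑ i, (S₂ i j - S₁ i j) = 0 := by simp [sum_sub_distrib, h₁col, h₂col]
  have hε : ∀ i j, T' i j = 0 → S₂ i j - S₁ i j = 0 := fun i j h ↦ by
    simp [hzero i j h.not_gt]
  have hL₁ := hp₁.sum_mul_log_div_eq_zero hrow hcol hε
  have hL₂ := hp₂.sum_mul_log_div_eq_zero hrow hcol hε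
  have hsum : ∑ i, ∑ j, (S₂ i j - S₁ i j) * (log (S₂ i j) - log (S₁ i j)) = 0 := by
    calc _ = ∑ i, ∑ j, ((S₂ i j - S₁ i j) * log (T' i j / S₁ i j) -
          (S₂ i j - S₁ i j) * log (T' i j / S₂ i j)) := by
          refine sum_congr rfl fun i _ ↦ sum_congr rfl fun j _ ↦ ?_
          by_cases hT' : 0 < T' i j
          · rw [log_div hT'.ne' (hpos i j hT').1.ne', log_div hT'.ne' (hpos i j hT').2.ne']
            ring
          · simp [hzero i j hT']
      _ = 0 := by simp only [sum_sub_distrib, hL₁, hL₂, sub_self]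
  by_contra hne
  obtain ⟨i, j, hij⟩ : ∃ i j, S₁ i j ≠ S₂ i j := by
    by_contra! h
    exact hne (funext fun i ↦ funext (h i))
  refine hsum.not_gt (sum_sum_pos (fun i j ↦ ?_) (i := i) (j := j) ?_)
  · by_cases hT' : 0 < T' i j
    · exact sub_mul_log_sub_log_nonneg (hpos i j hT').1 (hpos i j hT').2
    · simp [hzero i j hT']
  · by_cases hT' : 0 < T' i j
    · exact sub_mul_log_sub_log_pos (hpos i j hT').1 (hpos i j hT').2 hij
    · exact absurd ((hzero i j hT').1.trans (hzero i j hT').2.symm) hij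

end

theorem stmt13_general {n m : ℕ} (P₁ P₂ : Fin n → ℝ) (Q₁ Q₂ : Fin m → ℝ) :
    (∀ S₁ S₂ Sstar : Fin n → Fin m → ℝ,
      S₁ ∈ Coupling P₁ Q₁ → S₂ ∈ Coupling P₁ Q₁ →
      IsIProj S₁ (Coupling P₂ Q₂) Sstar → IsIProj S₂ (Coupling P₂ Q₂) Sstar →
      supp2 S₁ = supp2 Sstar → supp2 S₂ = supp2 Sstar → S₁ = S₂) ∧
    (GeomEquiv (Coupling P₁ Q₁) (Coupling P₂ Q₂) →
      ∀ S₁ S₂ Sstar : Fin n → Fin m → ℝ,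
        S₁ ∈ Coupling P₁ Q₁ → S₂ ∈ Coupling P₁ Q₁ →
        IsIProj S₁ (Coupling P₂ Q₂) Sstar → IsIProj S₂ (Coupling P₂ Q₂) Sstar →
        S₁ = S₂) :=
  ⟨fun _ _ _ h₁ h₂ hp₁ hp₂ hs₁ hs₂ ↦ eq_of_isIProj_of_supp2_eq h₁ h₂ hp₁ hp₂ hs₁ hs₂,
    fun hgeom S₁ S₂ _ h₁ h₂ hp₁ hp₂ ↦ eq_of_isIProj_of_supp2_eq h₁ h₂ hp₁ hp₂
      (hp₁.supp2_eq (hgeom.1 S₁ h₁)) (hp₂.supp2_eq (hgeom.1 S₂ h₂))⟩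

theorem stmt13 {n m : ℕ} (P₁ P₂ : Fin n → ℝ) (Q₁ Q₂ : Fin m → ℝ)
    (hP₁ : IsProbVec P₁) (hQ₁ : IsProbVec Q₁) (hP₂ : IsProbVec P₂) (hQ₂ : IsProbVec Q₂) :
    (∀ S₁ S₂ Sstar : Fin n → Fin m → ℝ,
      S₁ ∈ Coupling P₁ Q₁ → S₂ ∈ Coupling P₁ Q₁ →
      IsIProj S₁ (Coupling P₂ Q₂) Sstar → IsIProj S₂ (Coupling P₂ Q₂) Sstar →
      supp2 S₁ = supp2 Sstar → supp2 S₂ = supp2 Sstar → S₁ = S₂) ∧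
    (GeomEquiv (Coupling P₁ Q₁) (Coupling P₂ Q₂) →
      ∀ S₁ S₂ Sstar : Fin n → Fin m → ℝ,
        S₁ ∈ Coupling P₁ Q₁ → S₂ ∈ Coupling P₁ Q₁ →
        IsIProj S₁ (Coupling P₂ Q₂) Sstar → IsIProj S₂ (Coupling P₂ Q₂) Sstar →
        S₁ = S₂) :=
  stmt13_general P₁ P₂ Q₁ Q₂
end

section
/- The Fréchet–Hoeffding upper bound exists and is unique: for P ∈ Γ_n, Q ∈ Γ_m, there is exactly one element F ∈ 𝒞(P,Q) whose support is non-crossing, i.e., there do not exist i < i' and j' < j with F(i,j) > 0 and F(i',j') > 0. -/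
open Finset Filter Topology

/-! ### Auxiliary definitions for the Fréchet–Hoeffding upper bound -/

noncomputable def cum {n : ℕ} (P : Fin n → ℝ) (t : ℕ) : ℝ :=
  ∑ k : Fin n, if (k : ℕ) < t then P k else 0

lemma cum_zero {n : ℕ} (P : Fin n → ℝ) : cum P 0 = 0 := by simp [cum]

lemma cum_top {n : ℕ} (P : Fin n → ℝ) {t : ℕ} (ht : n ≤ t) : cum P t = ∑ k, P k := by
  unfold cum
  exact Finset.sum_congr rfl fun k _ => if_pos (lt_of_lt_of_le k.isLt ht)

lemma cum_mono {n : ℕ} {P : Fin n → ℝ} (hP : ∀ k, 0 ≤ P k) {s t : ℕ} (h : s ≤ t) :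
    cum P s ≤ cum P t := by
  apply Finset.sum_le_sum
  intro k _
  split_ifs with h1 h2
  · exact le_rfl
  · exact absurd (lt_of_lt_of_le h1 h) h2
  · exact hP k
  · exact le_rfl

lemma cum_nonneg {n : ℕ} {P : Fin n → ℝ} (hP : ∀ k, 0 ≤ P k) (t : ℕ) :
    0 ≤ cum P t := by
  have := cum_mono hP (Nat.zero_le t)
  rwa [cum_zero] at this

lemma cum_succ {n : ℕ} (P : Fin n → ℝ) (i : Fin n) :
    cum P ((i : ℕ) + 1) = cum P (i : ℕ) + P i := by
  unfold cum
  have h : ∀ k : Fin n, (if (k : ℕ) < (i : ℕ) + 1 then P k else 0)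
      = (if (k : ℕ) < (i : ℕ) then P k else 0) + (if k = i then P k else 0) := by
    intro k
    rcases lt_trichotomy (k : ℕ) (i : ℕ) with h | h | h
    · rw [if_pos (by omega), if_pos h, if_neg (by intro e; subst e; omega), add_zero]
    · rw [if_pos (by omega), if_neg (by omega), if_pos (Fin.ext h), zero_add]
    · rw [if_neg (by omega), if_neg (by omega), if_neg (by intro e; subst e; omega), add_zero]
  rw [Finset.sum_congr rfl fun k _ => h k, Finset.sum_add_distrib]
  congr 1
  simp

lemma minmax_identity (a A b B : ℝ) (hA : a ≤ A) (hB : b ≤ B) :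
    min A B - min A b - min a B + min a b = max (min A B - max a b) 0 := by
  simp only [min_def, max_def]
  split_ifs <;> linarith

noncomputable def CC {n m : ℕ} (P : Fin n → ℝ) (Q : Fin m → ℝ) (i j : ℕ) : ℝ :=
  min (cum P i) (cum Q j)

/-- The comonotone (Fréchet–Hoeffding) coupling. -/
noncomputable def Fr {n m : ℕ} (P : Fin n → ℝ) (Q : Fin m → ℝ) : Fin n → Fin m → ℝ :=
  fun i j => CC P Q ((i : ℕ) + 1) ((j : ℕ) + 1) - CC P Q ((i : ℕ) + 1) (j : ℕ)
    - CC P Q (i : ℕ) ((j : ℕ) + 1) + CC P Q (i : ℕ) (j : ℕ)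

lemma Fr_eq_max {n m : ℕ} {P : Fin n → ℝ} {Q : Fin m → ℝ}
    (hP : ∀ k, 0 ≤ P k) (hQ : ∀ k, 0 ≤ Q k) (i : Fin n) (j : Fin m) :
    Fr P Q i j = max (min (cum P ((i : ℕ) + 1)) (cum Q ((j : ℕ) + 1))
      - max (cum P (i : ℕ)) (cum Q (j : ℕ))) 0 := by
  have hA : cum P (i : ℕ) ≤ cum P ((i : ℕ) + 1) := cum_mono hP (Nat.le_succ _)
  have hB : cum Q (j : ℕ) ≤ cum Q ((j : ℕ) + 1) := cum_mono hQ (Nat.le_succ _)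
  have := minmax_identity (cum P (i : ℕ)) (cum P ((i : ℕ) + 1))
    (cum Q (j : ℕ)) (cum Q ((j : ℕ) + 1)) hA hB
  simpa [Fr, CC] using this

lemma Fr_nonneg {n m : ℕ} {P : Fin n → ℝ} {Q : Fin m → ℝ}
    (hP : ∀ k, 0 ≤ P k) (hQ : ∀ k, 0 ≤ Q k) (i : Fin n) (j : Fin m) :
    0 ≤ Fr P Q i j := by
  rw [Fr_eq_max hP hQ]
  exact le_max_right _ _

lemma Fr_pos_iff {n m : ℕ} {P : Fin n → ℝ} {Q : Fin m → ℝ}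
    (hP : ∀ k, 0 ≤ P k) (hQ : ∀ k, 0 ≤ Q k) {i : Fin n} {j : Fin m}
    (h : 0 < Fr P Q i j) :
    max (cum P (i : ℕ)) (cum Q (j : ℕ))
      < min (cum P ((i : ℕ) + 1)) (cum Q ((j : ℕ) + 1)) := by
  rw [Fr_eq_max hP hQ] at h
  by_contra hc
  push_neg at hc
  rw [max_eq_right (by linarith)] at h
  exact lt_irrefl _ h

lemma Fr_row {n m : ℕ} {P : Fin n → ℝ} {Q : Fin m → ℝ}
    (hP : IsProbVec P) (hQ : IsProbVec Q) (i : Fin n) :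
    ∑ j, Fr P Q i j = P i := by
  set g : ℕ → ℝ := fun t => min (cum P ((i : ℕ) + 1)) (cum Q t) - min (cum P (i : ℕ)) (cum Q t)
    with hg
  have h1 : ∑ j : Fin m, Fr P Q i j = ∑ t ∈ Finset.range m, (g (t + 1) - g t) := by
    rw [← Fin.sum_univ_eq_sum_range (fun t => g (t + 1) - g t)]
    refine Finset.sum_congr rfl fun j _ => ?_
    simp only [Fr, CC, hg]
    ring
  rw [h1, Finset.sum_range_sub g]
  have hQm : cum Q m = 1 := by rw [cum_top Q le_rfl, hQ.2]
  have hP1 : cum P ((i : ℕ) + 1) ≤ 1 := by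
    have := cum_mono hP.1 (show (i : ℕ) + 1 ≤ n from i.isLt)
    rwa [cum_top P le_rfl, hP.2] at this
  have hP0 : cum P (i : ℕ) ≤ 1 := le_trans (cum_mono hP.1 (Nat.le_succ _)) hP1
  have e1 : g m = P i := by
    simp only [hg, hQm, min_eq_left hP1, min_eq_left hP0]
    have := cum_succ P i
    linarith
  have e0 : g 0 = 0 := by
    simp only [hg, cum_zero, min_eq_right (cum_nonneg hP.1 _)]
    ring
  rw [e1, e0, sub_zero]

lemma Fr_col {n m : ℕ} {P : Fin n → ℝ} {Q : Fin m → ℝ}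
    (hP : IsProbVec P) (hQ : IsProbVec Q) (j : Fin m) :
    ∑ i, Fr P Q i j = Q j := by
  set g : ℕ → ℝ := fun t => min (cum P t) (cum Q ((j : ℕ) + 1)) - min (cum P t) (cum Q (j : ℕ))
    with hg
  have h1 : ∑ i : Fin n, Fr P Q i j = ∑ t ∈ Finset.range n, (g (t + 1) - g t) := by
    rw [← Fin.sum_univ_eq_sum_range (fun t => g (t + 1) - g t)]
    refine Finset.sum_congr rfl fun i _ => ?_
    simp only [Fr, CC, hg]
    ring
  rw [h1, Finset.sum_range_sub g]
  have hPn : cum P n = 1 := by rw [cum_top P le_rfl, hP.2]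
  have hQ1 : cum Q ((j : ℕ) + 1) ≤ 1 := by
    have := cum_mono hQ.1 (show (j : ℕ) + 1 ≤ m from j.isLt)
    rwa [cum_top Q le_rfl, hQ.2] at this
  have hQ0 : cum Q (j : ℕ) ≤ 1 := le_trans (cum_mono hQ.1 (Nat.le_succ _)) hQ1
  have e1 : g n = Q j := by
    simp only [hg, hPn, min_eq_right hQ1, min_eq_right hQ0]
    have := cum_succ Q j
    linarith
  have e0 : g 0 = 0 := by
    simp only [hg, cum_zero, min_eq_left (cum_nonneg hQ.1 _)]
    ring
  rw [e1, e0, sub_zero]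

lemma Fr_noncrossing {n m : ℕ} {P : Fin n → ℝ} {Q : Fin m → ℝ}
    (hP : ∀ k, 0 ≤ P k) (hQ : ∀ k, 0 ≤ Q k) :
    ¬∃ (i i' : Fin n) (j j' : Fin m),
        i < i' ∧ j' < j ∧ 0 < Fr P Q i j ∧ 0 < Fr P Q i' j' := by
  rintro ⟨i, i', j, j', hii, hjj, h1, h2⟩
  have k1 := Fr_pos_iff hP hQ h1
  have k2 := Fr_pos_iff hP hQ h2
  have a1 : cum Q (j : ℕ) < cum P ((i : ℕ) + 1) :=
    lt_of_le_of_lt (le_max_right _ _) (lt_of_lt_of_le k1 (min_le_left _ _))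
  have a2 : cum P ((i' : ℕ)) < cum Q ((j' : ℕ) + 1) :=
    lt_of_le_of_lt (le_max_left _ _) (lt_of_lt_of_le k2 (min_le_right _ _))
  have b1 : cum P ((i : ℕ) + 1) ≤ cum P (i' : ℕ) := cum_mono hP hii
  have b2 : cum Q ((j' : ℕ) + 1) ≤ cum Q (j : ℕ) := cum_mono hQ hjj
  linarith

/-- Cumulative rectangle sums of a bivariate array. -/
noncomputable def SG {n m : ℕ} (G : Fin n → Fin m → ℝ) (i j : ℕ) : ℝ :=
  ∑ p : Fin n × Fin m, if (p.1 : ℕ) < i ∧ (p.2 : ℕ) < j then G p.1 p.2 else 0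

lemma SG_right {n m : ℕ} {P : Fin n → ℝ} {Q : Fin m → ℝ} {G : Fin n → Fin m → ℝ}
    (hG : G ∈ Coupling P Q) (i : ℕ) : SG G i m = cum P i := by
  rw [SG, Fintype.sum_prod_type, cum]
  refine Finset.sum_congr rfl fun k _ => ?_
  have h0 : ∀ l : Fin m, (if (k : ℕ) < i ∧ (l : ℕ) < m then G k l else 0)
      = if (k : ℕ) < i then G k l else 0 := fun l => by simp [l.isLt]
  rw [Finset.sum_congr rfl fun l _ => h0 l]
  by_cases h : (k : ℕ) < i
  · rw [if_pos h, ← hG.2.1 k]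
    exact Finset.sum_congr rfl fun l _ => if_pos h
  · simp [h]

lemma SG_top {n m : ℕ} {P : Fin n → ℝ} {Q : Fin m → ℝ} {G : Fin n → Fin m → ℝ}
    (hG : G ∈ Coupling P Q) (j : ℕ) : SG G n j = cum Q j := by
  rw [SG, Fintype.sum_prod_type, Finset.sum_comm, cum]
  refine Finset.sum_congr rfl fun l _ => ?_
  have h0 : ∀ k : Fin n, (if (k : ℕ) < n ∧ (l : ℕ) < j then G k l else 0)
      = if (l : ℕ) < j then G k l else 0 := fun k => by simp [k.isLt]
  rw [Finset.sum_congr rfl fun k _ => h0 k]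
  by_cases h : (l : ℕ) < j
  · rw [if_pos h, ← hG.2.2 l]
    exact Finset.sum_congr rfl fun k _ => if_pos h
  · simp [h]

lemma SG_le {n m : ℕ} {G : Fin n → Fin m → ℝ} (hG : ∀ i j, 0 ≤ G i j)
    {i j i' j' : ℕ} (hi : i ≤ i') (hj : j ≤ j') : SG G i j ≤ SG G i' j' := by
  apply Finset.sum_le_sum
  intro p _
  split_ifs with h1 h2
  · exact le_rfl
  · exact absurd ⟨lt_of_lt_of_le h1.1 hi, lt_of_lt_of_le h1.2 hj⟩ h2
  · exact hG _ _
  · exact le_rfl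

lemma SG_diff_right {n m : ℕ} (G : Fin n → Fin m → ℝ) (i j : ℕ) :
    SG G i m - SG G i j
      = ∑ p : Fin n × Fin m, (if (p.1 : ℕ) < i ∧ j ≤ (p.2 : ℕ) then G p.1 p.2 else 0) := by
  rw [SG, SG, ← Finset.sum_sub_distrib]
  refine Finset.sum_congr rfl fun p _ => ?_
  have := p.2.isLt
  split_ifs <;> first | ring1 | (exfalso; omega)

lemma SG_diff_top {n m : ℕ} (G : Fin n → Fin m → ℝ) (i j : ℕ) :
    SG G n j - SG G i j
      = ∑ p : Fin n × Fin m, (if i ≤ (p.1 : ℕ) ∧ (p.2 : ℕ) < j then G p.1 p.2 else 0) := by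
  rw [SG, SG, ← Finset.sum_sub_distrib]
  refine Finset.sum_congr rfl fun p _ => ?_
  have := p.1.isLt
  split_ifs <;> first | ring1 | (exfalso; omega)

lemma SG_eq_CC {n m : ℕ} {P : Fin n → ℝ} {Q : Fin m → ℝ} {G : Fin n → Fin m → ℝ}
    (hG : G ∈ Coupling P Q)
    (hnc : ¬∃ (i i' : Fin n) (j j' : Fin m),
        i < i' ∧ j' < j ∧ 0 < G i j ∧ 0 < G i' j') (i j : ℕ) :
    SG G i j = min (cum P i) (cum Q j) := by
  have hpos := hG.1
  have hle1 : SG G i j ≤ cum P i := by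
    rw [← SG_right hG i]
    apply Finset.sum_le_sum
    intro p _
    split_ifs with h1 h2
    · exact le_rfl
    · exact (h2 ⟨h1.1, p.2.isLt⟩).elim
    · exact hpos _ _
    · exact le_rfl
  have hle2 : SG G i j ≤ cum Q j := by
    rw [← SG_top hG j]
    apply Finset.sum_le_sum
    intro p _
    split_ifs with h1 h2
    · exact le_rfl
    · exact (h2 ⟨p.1.isLt, h1.2⟩).elim
    · exact hpos _ _
    · exact le_rfl
  -- X = 0 or Y = 0
  have key : SG G i m - SG G i j = 0 ∨ SG G n j - SG G i j = 0 := by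
    by_contra hc
    push_neg at hc
    obtain ⟨hX, hY⟩ := hc
    obtain ⟨p, hp⟩ := Finset.exists_ne_zero_of_sum_ne_zero
      (by rw [← SG_diff_right G i j]; exact hX)
    obtain ⟨q, hq⟩ := Finset.exists_ne_zero_of_sum_ne_zero
      (by rw [← SG_diff_top G i j]; exact hY)
    have hp1 : (p.1 : ℕ) < i ∧ j ≤ (p.2 : ℕ) := by
      by_contra h; rw [if_neg h] at hp; exact hp.2 rfl
    have hq1 : i ≤ (q.1 : ℕ) ∧ (q.2 : ℕ) < j := by
      by_contra h; rw [if_neg h] at hq; exact hq.2 rfl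
    rw [if_pos hp1] at hp
    rw [if_pos hq1] at hq
    have hpG : 0 < G p.1 p.2 := lt_of_le_of_ne (hpos _ _) (Ne.symm hp.2)
    have hqG : 0 < G q.1 q.2 := lt_of_le_of_ne (hpos _ _) (Ne.symm hq.2)
    exact hnc ⟨p.1, q.1, p.2, q.2,
      show (p.1 : ℕ) < (q.1 : ℕ) by omega,
      show (q.2 : ℕ) < (p.2 : ℕ) by omega, hpG, hqG⟩
  rcases key with h | h
  · have : SG G i j = cum P i := by
      have := SG_right hG i; linarith
    rw [this, min_eq_left (by linarith)]
  · have : SG G i j = cum Q j := by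
      have := SG_top hG j; linarith
    rw [this, min_eq_right (by linarith)]

lemma SG_entry {n m : ℕ} (G : Fin n → Fin m → ℝ) (i : Fin n) (j : Fin m) :
    G i j = SG G ((i : ℕ) + 1) ((j : ℕ) + 1) - SG G ((i : ℕ) + 1) (j : ℕ)
      - SG G (i : ℕ) ((j : ℕ) + 1) + SG G (i : ℕ) (j : ℕ) := by
  simp only [SG, ← Finset.sum_sub_distrib, ← Finset.sum_add_distrib]
  have h : ∀ p : Fin n × Fin m,
      ((if (p.1 : ℕ) < (i : ℕ) + 1 ∧ (p.2 : ℕ) < (j : ℕ) + 1 then G p.1 p.2 else 0)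
        - (if (p.1 : ℕ) < (i : ℕ) + 1 ∧ (p.2 : ℕ) < (j : ℕ) then G p.1 p.2 else 0)
        - (if (p.1 : ℕ) < (i : ℕ) ∧ (p.2 : ℕ) < (j : ℕ) + 1 then G p.1 p.2 else 0)
        + (if (p.1 : ℕ) < (i : ℕ) ∧ (p.2 : ℕ) < (j : ℕ) then G p.1 p.2 else 0))
      = if p = (i, j) then G p.1 p.2 else 0 := by
    rintro ⟨a, b⟩
    dsimp only
    by_cases hp : (a, b) = (i, j)
    · rw [Prod.mk.injEq] at hp
      obtain ⟨ha, hb⟩ := hp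
      subst ha; subst hb
      rw [if_pos rfl, if_pos ⟨Nat.lt_succ_self _, Nat.lt_succ_self _⟩,
        if_neg (by simp), if_neg (by simp), if_neg (by simp)]
      ring
    · rw [if_neg hp]
      have hne : (a : ℕ) ≠ (i : ℕ) ∨ (b : ℕ) ≠ (j : ℕ) := by
        by_contra h
        push_neg at h
        exact hp (Prod.ext (Fin.ext h.1) (Fin.ext h.2))
      split_ifs <;> first | ring1 | (exfalso; omega)
  rw [Finset.sum_congr rfl fun p _ => h p, Finset.sum_ite_eq' Finset.univ (i, j)
    (fun p => G p.1 p.2), if_pos (Finset.mem_univ _)]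

theorem stmt19 {n m : ℕ} (P : Fin n → ℝ) (Q : Fin m → ℝ)
    (hP : IsProbVec P) (hQ : IsProbVec Q) :
    ∃! F : Fin n → Fin m → ℝ, F ∈ Coupling P Q ∧
      ¬∃ (i i' : Fin n) (j j' : Fin m),
        i < i' ∧ j' < j ∧ 0 < F i j ∧ 0 < F i' j' := by
  refine ⟨Fr P Q, ⟨⟨fun i j => Fr_nonneg hP.1 hQ.1 i j, Fr_row hP hQ, Fr_col hP hQ⟩,
    Fr_noncrossing hP.1 hQ.1⟩, ?_⟩
  rintro G ⟨hG, hGnc⟩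
  funext i j
  rw [SG_entry G i j]
  have e := SG_eq_CC hG hGnc
  rw [e, e, e, e]
  rfl
end
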